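/- Let D be a type with a binary relation ~ (the neighboring relation) and let Ms : List (D → PMF A) be a finite list of mechanisms such that the i-th mechanism satisfies (εᵢ, δᵢ)-differential privacy with respect to ~, where all εᵢ, δᵢ ≥ 0. Define the joint mechanism J recursively by J([]) d = PMF.pure [] and J(M :: Ms') d = (M d).bind (fun a => (J Ms' d).map (List.cons a)). Then J(Ms) satisfies (Σᵢ εᵢ, Σᵢ δᵢ)-differential privacy: for all d₁ ~ d₂ and every set S of lists over A, Pr[J(Ms)(d₁) ∈ S] ≤ e^{Σᵢ εᵢ} · Pr[J(Ms)(d₂) ∈ S] + Σᵢ δᵢ. -/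

import Mathlib

/-!
The inequality `p(S) ≤ e q(S) + δ` for all sets `S` extends to expectations of `[0,1]`-valued
functions: the total excess mass `∑ₐ (p a - e q a)⁺` equals `p(T) - e q(T)` for
`T = {a | e q a < p a}`, hence is at most `δ`. When a second mechanism runs after the first, the
probability that its output lands in `S` given first output `a` is at most
`min 1 (e' q_a(S)) + δ'`; integrating this `[0,1]`-valued bound against the first mechanism gives
the parameters `(e e', δ + δ')`. Induction along the list multiplies the `exp εᵢ` and adds the
`δᵢ`.
-/

/-- The joint mechanism that runs a list of mechanisms independently on the
same database and releases the list of their outputs. -/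
noncomputable def jointMech {D A : Type*} : List (D → PMF A) → D → PMF (List A)
  | [], _ => PMF.pure []
  | M :: Ms', d => (M d).bind (fun a => (jointMech Ms' d).map (List.cons a))

open ENNReal

namespace PMF

variable {α β : Type*}

/-- The inequality of `(ε, δ)`-differential privacy for one pair of output distributions,
with `e = exp ε`. -/
def DPDominated (e δ : ℝ≥0∞) (p q : PMF α) : Prop :=
  ∀ S : Set α, p.toOuterMeasure S ≤ e * q.toOuterMeasure S + δ

theorem toOuterMeasure_apply_le_one (p : PMF α) (s : Set α) : p.toOuterMeasure s ≤ 1 :=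
  (p.toOuterMeasure.mono (Set.subset_univ s)).trans_eq
    (p.toOuterMeasure_apply_eq_one_iff _ |>.2 (Set.subset_univ _))

namespace DPDominated

variable {e e' δ δ' : ℝ≥0∞} {p q : PMF α}

theorem tsum_tsub_le (h : DPDominated e δ p q) (he : e ≠ ∞) :
    ∑' a, (p a - e * q a) ≤ δ := by
  set T : Set α := {a | e * q a < p a}
  have h_split (a : α) :
      (p a - e * q a) + T.indicator (fun a => e * q a) a = T.indicator p a := by
    by_cases ha : a ∈ T
    · simp only [Set.indicator_of_mem ha, tsub_add_cancel_of_le (show e * q a < p a from ha).le]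
    · simp only [Set.indicator_of_notMem ha, add_zero]
      exact tsub_eq_zero_of_le (not_lt.mp ha)
  have h_excluded : ∑' a, T.indicator (fun a => e * q a) a = e * q.toOuterMeasure T := by
    rw [toOuterMeasure_apply, ← ENNReal.tsum_mul_left]
    exact tsum_congr (Set.indicator_const_mul T q e)
  refine ENNReal.le_of_add_le_add_right
    (mul_ne_top he (ne_top_of_le_ne_top one_ne_top (q.toOuterMeasure_apply_le_one T))) ?_
  calc ∑' a, (p a - e * q a) + e * q.toOuterMeasure T = p.toOuterMeasure T := by
        rw [← h_excluded, ← ENNReal.tsum_add, toOuterMeasure_apply]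
        exact tsum_congr h_split
    _ ≤ δ + e * q.toOuterMeasure T := (h T).trans_eq (add_comm _ _)

theorem tsum_mul_le (h : DPDominated e δ p q) (he : e ≠ ∞) {g : α → ℝ≥0∞}
    (hg : ∀ a, g a ≤ 1) : ∑' a, p a * g a ≤ e * ∑' a, q a * g a + δ := by
  have h_pointwise (a : α) : p a * g a ≤ e * (q a * g a) + (p a - e * q a) :=
    calc p a * g a ≤ (e * q a + (p a - e * q a)) * g a := by gcongr; exact le_add_tsub
      _ ≤ e * (q a * g a) + (p a - e * q a) := by
        rw [add_mul, mul_assoc]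
        gcongr
        exact mul_le_of_le_one_right' (hg a)
  calc ∑' a, p a * g a ≤ ∑' a, (e * (q a * g a) + (p a - e * q a)) :=
        ENNReal.tsum_le_tsum h_pointwise
    _ ≤ e * ∑' a, q a * g a + δ := by
        rw [ENNReal.tsum_add, ENNReal.tsum_mul_left]
        gcongr
        exact h.tsum_tsub_le he

theorem bind (h : DPDominated e δ p q) (he : e ≠ ∞) {f g : α → PMF β}
    (hfg : ∀ a, DPDominated e' δ' (f a) (g a)) :
    DPDominated (e * e') (δ + δ') (p.bind f) (q.bind g) := by
  intro S
  set c : α → ℝ≥0∞ := fun a => min 1 (e' * (g a).toOuterMeasure S)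
  have h_cond (a : α) : (f a).toOuterMeasure S ≤ c a + δ' := by
    rw [← min_add_add_right]
    exact le_min (((f a).toOuterMeasure_apply_le_one S).trans le_self_add) (hfg a S)
  calc (p.bind f).toOuterMeasure S = ∑' a, p a * (f a).toOuterMeasure S :=
        toOuterMeasure_bind_apply p f S
    _ ≤ ∑' a, p a * (c a + δ') := ENNReal.tsum_le_tsum fun a => by gcongr; exact h_cond a
    _ = ∑' a, p a * c a + δ' := by
        simp only [mul_add, ENNReal.tsum_add, ENNReal.tsum_mul_right, tsum_coe, one_mul]
    _ ≤ e * ∑' a, q a * c a + δ + δ' := by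
        gcongr
        exact h.tsum_mul_le he fun a => min_le_left _ _
    _ ≤ e * ∑' a, q a * (e' * (g a).toOuterMeasure S) + δ + δ' := by
        gcongr with a
        exact min_le_right _ _
    _ = e * e' * (q.bind g).toOuterMeasure S + (δ + δ') := by
        rw [toOuterMeasure_bind_apply, add_assoc, mul_assoc, ← ENNReal.tsum_mul_left (a := e')]
        congr 3 with a
        ring

theorem map (h : DPDominated e δ p q) (f : α → β) : DPDominated e δ (p.map f) (q.map f) := by
  intro S
  simp only [toOuterMeasure_map_apply]
  exact h _

end DPDominated

end PMF

open PMF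

theorem jointMech_dpDominated {D A : Type*} {d₁ d₂ : D} (Ms : List (D → PMF A))
    (εs δs : List ℝ) (hlenε : εs.length = Ms.length) (hlenδ : δs.length = Ms.length)
    (hδ : ∀ x ∈ δs, 0 ≤ x)
    (hDP : ∀ i (hiε : i < εs.length) (hiδ : i < δs.length) (hiM : i < Ms.length),
      DPDominated (ENNReal.ofReal (Real.exp εs[i])) (ENNReal.ofReal δs[i])
        (Ms[i] d₁) (Ms[i] d₂)) :
    DPDominated (ENNReal.ofReal (Real.exp εs.sum)) (ENNReal.ofReal δs.sum)
      (jointMech Ms d₁) (jointMech Ms d₂) := by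
  induction Ms generalizing εs δs with
  | nil =>
    obtain rfl := List.length_eq_zero_iff.mp hlenε
    obtain rfl := List.length_eq_zero_iff.mp hlenδ
    intro S
    simp [jointMech]
  | cons M Ms ih =>
    obtain _ | ⟨ε, εs⟩ := εs
    · simp at hlenε
    obtain _ | ⟨δ, δs⟩ := δs
    · simp at hlenδ
    simp only [List.length_cons, Nat.add_right_cancel_iff] at hlenε hlenδ
    simp only [List.mem_cons, forall_eq_or_imp] at hδ
    have h_tail := ih εs δs hlenε hlenδ hδ.2 fun i hiε hiδ hiM =>
      hDP (i + 1) (by simpa) (by simpa) (by simpa)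
    rw [List.sum_cons, List.sum_cons, Real.exp_add, ENNReal.ofReal_mul (Real.exp_nonneg _),
      ENNReal.ofReal_add hδ.1 (List.sum_nonneg hδ.2)]
    exact (hDP 0 (by simp) (by simp) (by simp)).bind ofReal_ne_top fun a => h_tail.map (List.cons a)

/-- Sequential composition of a finite list of differentially private mechanisms. -/
theorem seq_composition_list
    {D A : Type*} (neighbor : D → D → Prop)
    (Ms : List (D → PMF A)) (εs δs : List ℝ)
    (hlenε : εs.length = Ms.length) (hlenδ : δs.length = Ms.length)
    (hδ : ∀ x ∈ δs, 0 ≤ x)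
    (hDP : ∀ i : Fin Ms.length, ∀ d₁ d₂, neighbor d₁ d₂ → ∀ S : Set A,
      (Ms[i] d₁).toOuterMeasure S ≤
        ENNReal.ofReal (Real.exp (εs[(i : ℕ)]'(by rw [hlenε]; exact i.isLt))) *
          (Ms[i] d₂).toOuterMeasure S +
        ENNReal.ofReal (δs[(i : ℕ)]'(by rw [hlenδ]; exact i.isLt))) :
    ∀ d₁ d₂, neighbor d₁ d₂ → ∀ S : Set (List A),
      (jointMech Ms d₁).toOuterMeasure S ≤
        ENNReal.ofReal (Real.exp εs.sum) * (jointMech Ms d₂).toOuterMeasure S +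
        ENNReal.ofReal δs.sum :=
  fun _ _ hn =>
    jointMech_dpDominated Ms εs δs hlenε hlenδ hδ fun i _ _ hiM => hDP ⟨i, hiM⟩ _ _ hn
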